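/- Let R be a commutative ring of characteristic 2, n ≥ 2, 1 ≤ i ≤ n−1, b ∈ R, and let U ∈ Mat_n(R) be strictly upper triangular. Set b' = b + U_{i,i+1}. Then Z_i(b')⁻¹·(I + U)·Z_i(b) is upper unitriangular, i.e., all of its entries strictly below the diagonal vanish and all of its diagonal entries equal 1. -/

import Mathlib

/-!
Write `Z_i(b) = T(b) S` with `T(b) = I + b E_{i,i+1}` a transvection and `S` the permutation
matrix of the transposition `(i i+1)`. Then `Z_i(b')⁻¹ (I + U) Z_i(b) = S V S` with
`V = T(-b') (I + U) T(b)` upper unitriangular, and the choice `b' = b + U_{i,i+1}` is exactly what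
makes `V_{i,i+1} = 0`. Conjugating by `S` swaps two adjacent rows and columns, which keeps every
entry of `V` on its side of the diagonal except `V_{i,i+1}`, so `S V S` is upper unitriangular.
-/

open Matrix

def Zmat {R : Type*} [CommRing R] (n i : ℕ) (b : R) : Matrix (Fin n) (Fin n) R :=
  Matrix.of fun a c =>
    if (a : ℕ) + 1 = i ∧ (c : ℕ) + 1 = i then b
    else if (a : ℕ) + 1 = i ∧ (c : ℕ) = i then 1
    else if (a : ℕ) = i ∧ (c : ℕ) + 1 = i then 1
    else if (a : ℕ) = i ∧ (c : ℕ) = i then 0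
    else if a = c then 1 else 0

theorem CovBy.swap_lt_swap {α : Type*} [LinearOrder α] [DecidableEq α] {j k a c : α}
    (hjk : j ⋖ k) (hca : c < a) (hne : ¬(c = j ∧ a = k)) :
    Equiv.swap j k c < Equiv.swap j k a := by
  have hlt := hjk.lt
  have hbelow : ∀ x, x < k → x ≤ j := fun _ => hjk.le_of_lt
  have habove : ∀ x, j < x → k ≤ x := fun _ => hjk.ge_of_gt
  rw [Equiv.swap_apply_def, Equiv.swap_apply_def]
  split_ifs <;> grind

namespace Matrix

variable {n R : Type*}

theorem swap_mul_mul_swap_apply [DecidableEq n] [Fintype n] [NonAssocSemiring R] (j k : n)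
    (M : Matrix n n R) (a c : n) :
    (swap R j k * M * swap R j k) a c = M (Equiv.swap j k a) (Equiv.swap j k c) := by
  simp [swap, PEquiv.toMatrix_toPEquiv_mul, PEquiv.mul_toMatrix_toPEquiv]

def IsUpperUnitriangular [LT n] [Zero R] [One R] (M : Matrix n n R) : Prop :=
  M.IsUpperTriangular ∧ ∀ a, M a a = 1

section LinearOrder

variable [LinearOrder n]

theorem IsUpperTriangular.mul_apply_self [Fintype n] [NonUnitalNonAssocSemiring R]
    {M N : Matrix n n R} (hM : M.IsUpperTriangular) (hN : N.IsUpperTriangular) (a : n) :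
    (M * N) a a = M a a * N a a := by
  rw [mul_apply]
  refine Finset.sum_eq_single a (fun x _ hxa => ?_) (by simp)
  rcases hxa.lt_or_gt with hxa | hax
  · exact mul_eq_zero_of_left (hM hxa) _
  · exact mul_eq_zero_of_right _ (hN hax)

theorem IsUpperUnitriangular.mul [Fintype n] [NonAssocSemiring R] {M N : Matrix n n R}
    (hM : M.IsUpperUnitriangular) (hN : N.IsUpperUnitriangular) :
    (M * N).IsUpperUnitriangular :=
  ⟨hM.1.mul hN.1, fun a => by rw [hM.1.mul_apply_self hN.1, hM.2, hN.2, one_mul]⟩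

theorem isUpperUnitriangular_one_add [DecidableEq n] [AddMonoidWithOne R] {U : Matrix n n R}
    (hU : ∀ a c, c ≤ a → U a c = 0) : (1 + U).IsUpperUnitriangular :=
  ⟨blockTriangular_one.add fun a c hca => hU a c hca.le,
    fun a => by rw [add_apply, one_apply_eq, hU a a le_rfl, add_zero]⟩

theorem isUpperUnitriangular_transvection [DecidableEq n] [CommRing R] {j k : n} (hjk : j < k)
    (c : R) : (transvection j k c).IsUpperUnitriangular :=
  ⟨blockTriangular_transvection hjk.le c, fun a => by
    simp only [transvection, add_apply, one_apply_eq, single_apply]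
    rw [if_neg fun h => hjk.ne (h.1.trans h.2.symm), add_zero]⟩

theorem IsUpperUnitriangular.swap_mul_mul_swap [DecidableEq n] [Fintype n] [NonAssocSemiring R]
    {M : Matrix n n R} (hM : M.IsUpperUnitriangular) {j k : n} (hjk : j ⋖ k) (hMjk : M j k = 0) :
    (swap R j k * M * swap R j k).IsUpperUnitriangular := by
  refine ⟨fun a c (hca : c < a) => ?_, fun a => by rw [swap_mul_mul_swap_apply, hM.2]⟩
  rw [swap_mul_mul_swap_apply]
  by_cases hpair : c = j ∧ a = k
  · obtain ⟨rfl, rfl⟩ := hpair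
    simpa using hMjk
  · exact hM.1 (hjk.swap_lt_swap hca hpair)

theorem IsUpperUnitriangular.transvection_mul_mul_transvection_apply [DecidableEq n] [Fintype n]
    [CommRing R] {M : Matrix n n R} (hM : M.IsUpperUnitriangular) {j k : n} (hjk : j < k)
    (b b' : R) : (transvection j k (-b') * M * transvection j k b) j k = M j k + b - b' := by
  rw [mul_transvection_apply_same, transvection_mul_apply_same, transvection_mul_apply_same,
    hM.2, hM.2, hM.1 hjk]
  ring

end LinearOrder

end Matrix

section Zmat

variable {R : Type*} [CommRing R] {n i : ℕ}

theorem Zmat_eq_transvection_mul_swap (b : R) {j k : Fin n} (hj : (j : ℕ) + 1 = i)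
    (hk : (k : ℕ) = i) : Zmat n i b = transvection j k b * swap R j k := by
  ext a c
  rw [swap, Equiv.Perm.permMatrix, PEquiv.mul_toMatrix_toPEquiv]
  simp only [Zmat, of_apply, submatrix_apply, id, Equiv.symm_swap, transvection, Matrix.add_apply,
    one_apply, single_apply, Equiv.swap_apply_def, Fin.ext_iff]
  split_ifs <;> first | (exfalso; omega) | simp

theorem Zmat_inv (b : R) {j k : Fin n} (hj : (j : ℕ) + 1 = i) (hk : (k : ℕ) = i) :
    (Zmat n i b)⁻¹ = swap R j k * transvection j k (-b) := by
  have hjk : j ≠ k := fun h => by rw [h] at hj; omega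
  refine inv_eq_right_inv ?_
  rw [Zmat_eq_transvection_mul_swap b hj hk, Matrix.mul_assoc, ← Matrix.mul_assoc (swap R j k),
    swap_mul_self, Matrix.one_mul, transvection_mul_transvection_same _ _ hjk, add_neg_cancel,
    transvection_zero]

end Zmat

/-- If `U` is strictly upper triangular and `b' = b + U_{i,i+1}` (1-based indices),
then `Z_i(b')⁻¹ (I + U) Z_i(b)` is upper unitriangular. -/
theorem Zmat_conj_upper_unitriangular {R : Type*} [CommRing R] {n : ℕ}
    (i : ℕ) (hi1 : 1 ≤ i) (hi2 : i ≤ n - 1) (b : R)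
    (U : Matrix (Fin n) (Fin n) R) (hU : ∀ a c : Fin n, c ≤ a → U a c = 0) :
    (∀ a c : Fin n, c < a →
        ((Zmat n i (b + U ⟨i - 1, by omega⟩ ⟨i, by omega⟩))⁻¹
          * (1 + U) * Zmat n i b) a c = 0) ∧
    (∀ a : Fin n,
        ((Zmat n i (b + U ⟨i - 1, by omega⟩ ⟨i, by omega⟩))⁻¹
          * (1 + U) * Zmat n i b) a a = 1) := by
  set j : Fin n := ⟨i - 1, by omega⟩
  set k : Fin n := ⟨i, by omega⟩
  have hj : (j : ℕ) + 1 = i := Nat.sub_add_cancel hi1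
  have hk : (k : ℕ) = i := rfl
  have hjk : j ⋖ k := ⟨Fin.lt_def.2 (by omega),
    fun c hjc hck => by rw [Fin.lt_def] at hjc hck; omega⟩
  have hM := isUpperUnitriangular_one_add hU
  have hV := ((isUpperUnitriangular_transvection hjk.lt (-(b + U j k))).mul hM).mul
    (isUpperUnitriangular_transvection hjk.lt b)
  have hVjk : (transvection j k (-(b + U j k)) * (1 + U) * transvection j k b) j k = 0 := by
    rw [hM.transvection_mul_mul_transvection_apply hjk.lt, Matrix.add_apply, one_apply_ne hjk.lt.ne]
    ring
  have hconj : (Zmat n i (b + U j k))⁻¹ * (1 + U) * Zmat n i b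
      = swap R j k * (transvection j k (-(b + U j k)) * (1 + U) * transvection j k b)
        * swap R j k := by
    rw [Zmat_inv _ hj hk, Zmat_eq_transvection_mul_swap b hj hk]
    simp only [Matrix.mul_assoc]
  rw [hconj]
  exact hV.swap_mul_mul_swap hjk hVjk
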